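/- The map q₀ : f ↦ log(f') descends to a bijection from the quotient of {f : ℝ → ℝ smooth : f' > 0, f(x+2π) = f(x)+2π} by the ℝ-action f ↦ f + φ, onto the quotient of {u : ℝ → ℝ smooth 2π-periodic} by the ℝ-action u ↦ u + ψ. The inverse is induced by u ↦ f(x) = f(0) + (2π/∫₀^{2π} e^{u(s)}ds)·∫₀ˣ e^{u(t)}dt. -/

import Mathlib

open Real

/-- Lifts of orientation-preserving circle diffeomorphisms. -/
def DiffSet : Set (ℝ → ℝ) :=
  {f | ContDiff ℝ (⊤ : ℕ∞) f ∧ (∀ x, 0 < deriv f x) ∧ ∀ x, f (x + 2*π) = f x + 2*π}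

/-- Smooth 2π-periodic functions. -/
def PerSet : Set (ℝ → ℝ) :=
  {u | ContDiff ℝ (⊤ : ℕ∞) u ∧ ∀ x, u (x + 2*π) = u x}

/-- The map q₀ : f ↦ log f'. -/
noncomputable def qZero (f : ℝ → ℝ) : ℝ → ℝ := fun x => Real.log (deriv f x)

/-- The claimed inverse (with the normalization f(0) = 0). -/
noncomputable def qZeroInv (u : ℝ → ℝ) : ℝ → ℝ := fun x =>
  (2*π / ∫ s in (0:ℝ)..(2*π), Real.exp (u s)) * ∫ t in (0:ℝ)..x, Real.exp (u t)

private lemma deriv_per {f : ℝ → ℝ} (hf : ∀ x, f (x + 2*π) = f x + 2*π) (x : ℝ) :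
    deriv f (x + 2*π) = deriv f x := by
  have h : (fun y => f (y + 2*π)) = fun y => f y + 2*π := funext hf
  calc deriv f (x + 2*π) = deriv (fun y => f (y + 2*π)) x := (deriv_comp_add_const f _ x).symm
    _ = deriv f x := by rw [h]; exact congrFun (deriv_add_const' (2*π)) x

private lemma integral_deriv' {f : ℝ → ℝ} (hf : ContDiff ℝ (⊤ : ℕ∞) f) (a b : ℝ) :
    ∫ x in a..b, deriv f x = f b - f a := by
  apply intervalIntegral.integral_deriv_eq_sub (fun x _ => hf.differentiable (by simp) x)
  exact (hf.continuous_deriv (by simp)).intervalIntegrable _ _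

private lemma A_pos {u : ℝ → ℝ} (hu : Continuous u) :
    0 < ∫ s in (0:ℝ)..(2*π), Real.exp (u s) := by
  apply intervalIntegral.intervalIntegral_pos_of_pos_on
    ((Real.continuous_exp.comp hu).intervalIntegrable _ _)
    (fun x _ => Real.exp_pos _)
  positivity

private lemma F_shift {u : ℝ → ℝ} (hu : Continuous u) (hper : ∀ x, u (x + 2*π) = u x) (x : ℝ) :
    (∫ t in (0:ℝ)..(x + 2*π), Real.exp (u t)) =
      (∫ t in (0:ℝ)..x, Real.exp (u t)) + ∫ s in (0:ℝ)..(2*π), Real.exp (u s) := by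
  have hc : Continuous fun t => Real.exp (u t) := Real.continuous_exp.comp hu
  have hint : ∀ a b : ℝ, IntervalIntegrable (fun t => Real.exp (u t)) MeasureTheory.volume a b :=
    fun a b => hc.intervalIntegrable a b
  have hp : Function.Periodic (fun t => Real.exp (u t)) (2*π) := fun t => by simp [hper t]
  have h1 : (∫ t in (0:ℝ)..x, Real.exp (u t)) + (∫ t in x..(x + 2*π), Real.exp (u t)) =
      ∫ t in (0:ℝ)..(x + 2*π), Real.exp (u t) :=
    intervalIntegral.integral_add_adjacent_intervals (hint 0 x) (hint x (x + 2*π))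
  have h2 : (∫ t in x..(x + 2*π), Real.exp (u t)) = ∫ s in (0:ℝ)..(0 + 2*π), Real.exp (u s) :=
    hp.intervalIntegral_add_eq x 0
  rw [← h1, h2, zero_add]

theorem q_zero_descends_to_bijection :
    -- q₀ maps DiffSet into PerSet
    (∀ f ∈ DiffSet, qZero f ∈ PerSet) ∧
    -- injectivity on equivalence classes: q₀ f₁ and q₀ f₂ agree up to a constant
    -- iff f₁ and f₂ agree up to a constant
    (∀ f₁ ∈ DiffSet, ∀ f₂ ∈ DiffSet,
      ((∃ ψ : ℝ, ∀ x, qZero f₁ x = qZero f₂ x + ψ) ↔ (∃ φ : ℝ, ∀ x, f₁ x = f₂ x + φ))) ∧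
    -- surjectivity on classes, realized by the explicit inverse formula
    (∀ u ∈ PerSet, qZeroInv u ∈ DiffSet ∧ ∃ ψ : ℝ, ∀ x, qZero (qZeroInv u) x = u x + ψ) ∧
    -- well-definedness of the inverse on classes: shifting u by a constant does not
    -- change qZeroInv u
    (∀ u ∈ PerSet, ∀ ψ : ℝ, qZeroInv (fun x => u x + ψ) = qZeroInv u) := by
  refine ⟨?_, ?_, ?_, ?_⟩
  · -- q₀ maps DiffSet to PerSet
    rintro f ⟨hf, hpos, hper⟩
    refine ⟨?_, fun x => ?_⟩
    · have hder : ContDiff ℝ (⊤ : ℕ∞) (deriv f) :=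
        (contDiff_infty_iff_deriv.mp hf).2
      exact hder.log (fun x => (hpos x).ne')
    · show Real.log (deriv f (x + 2*π)) = Real.log (deriv f x)
      rw [deriv_per hper]
  · -- injectivity
    rintro f₁ ⟨hf₁, hpos₁, hper₁⟩ f₂ ⟨hf₂, hpos₂, hper₂⟩
    constructor
    · rintro ⟨ψ, hψ⟩
      -- exponentiate: deriv f₁ = exp ψ * deriv f₂
      have hd : ∀ x, deriv f₁ x = Real.exp ψ * deriv f₂ x := by
        intro x
        have := hψ x
        simp only [qZero] at this
        have h1 : deriv f₁ x = Real.exp (Real.log (deriv f₁ x)) :=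
          (Real.exp_log (hpos₁ x)).symm
        rw [h1, this, Real.exp_add, Real.exp_log (hpos₂ x), mul_comm]
      -- integrate over [0, 2π]
      have hI₁ : ∫ x in (0:ℝ)..(2*π), deriv f₁ x = 2*π := by
        rw [integral_deriv' hf₁]
        have := hper₁ 0; rw [zero_add] at this; rw [this]; ring
      have hI₂ : ∫ x in (0:ℝ)..(2*π), deriv f₂ x = 2*π := by
        rw [integral_deriv' hf₂]
        have := hper₂ 0; rw [zero_add] at this; rw [this]; ring
      have hexp1 : Real.exp ψ = 1 := by
        have : (∫ x in (0:ℝ)..(2*π), deriv f₁ x) =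
            Real.exp ψ * ∫ x in (0:ℝ)..(2*π), deriv f₂ x := by
          rw [← intervalIntegral.integral_const_mul]
          exact intervalIntegral.integral_congr (fun x _ => hd x)
        rw [hI₁, hI₂] at this
        have h2π : (2:ℝ)*π ≠ 0 := by positivity
        have h3 : Real.exp ψ * (2*π) = 1 * (2*π) := by rw [one_mul]; linarith
        exact mul_right_cancel₀ h2π h3
      have hderiv_eq : ∀ x, deriv f₁ x = deriv f₂ x := by
        intro x; rw [hd x, hexp1, one_mul]
      -- f₁ - f₂ is constant
      have hdiff₁ := hf₁.differentiable (by simp)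
      have hdiff₂ := hf₂.differentiable (by simp)
      have hzero : ∀ x, deriv (fun y => f₁ y - f₂ y) x = 0 := by
        intro x
        rw [deriv_fun_sub (hdiff₁ x) (hdiff₂ x), hderiv_eq x, sub_self]
      have hconst := is_const_of_deriv_eq_zero (hdiff₁.sub hdiff₂) hzero
      exact ⟨f₁ 0 - f₂ 0, fun x => by have := hconst x 0; simp only [Pi.sub_apply] at this; linarith [this]⟩
    · rintro ⟨φ, hφ⟩
      refine ⟨0, fun x => ?_⟩
      have h : f₁ = fun y => f₂ y + φ := funext hφ
      simp only [qZero, h, add_zero]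
      rw [show deriv (fun y => f₂ y + φ) = deriv f₂ from deriv_add_const' φ]
      
  · -- surjectivity
    rintro u ⟨hu, hper⟩
    have huc : Continuous u := hu.continuous
    have hc : Continuous fun t => Real.exp (u t) := Real.continuous_exp.comp huc
    set A : ℝ := ∫ s in (0:ℝ)..(2*π), Real.exp (u s) with hA
    have hApos : 0 < A := A_pos huc
    set c : ℝ := 2*π / A with hc'
    have hcpos : 0 < c := by positivity
    set F : ℝ → ℝ := fun x => ∫ t in (0:ℝ)..x, Real.exp (u t) with hF
    have hFeq : qZeroInv u = fun x => c * F x := rfl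
    have hFderiv : ∀ x, HasDerivAt F (Real.exp (u x)) x := by
      intro x
      exact intervalIntegral.integral_hasDerivAt_right (hc.intervalIntegrable _ _)
        (hc.stronglyMeasurableAtFilter _ _) hc.continuousAt
    have hFdiff : Differentiable ℝ F := fun x => (hFderiv x).differentiableAt
    have hFderiv' : deriv F = fun x => Real.exp (u x) := funext fun x => (hFderiv x).deriv
    have hgan : ContDiff ℝ (⊤ : ℕ∞) fun t => Real.exp (u t) := Real.contDiff_exp.comp hu
    have hFsmooth : ContDiff ℝ (⊤ : ℕ∞) F := by
      rw [contDiff_infty_iff_deriv]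
      exact ⟨hFdiff, by rw [hFderiv']; exact hgan⟩
    have hqderiv : ∀ x, deriv (qZeroInv u) x = c * Real.exp (u x) := by
      intro x
      rw [hFeq, deriv_const_mul c (hFdiff x), hFderiv']
    refine ⟨⟨?_, ?_, ?_⟩, Real.log c, fun x => ?_⟩
    · exact hFsmooth.const_smul c
    · intro x; rw [hqderiv x]; positivity
    · intro x
      have := F_shift huc hper x
      rw [hFeq]
      simp only
      rw [show F (x + 2*π) = F x + A from this, mul_add, hc', div_mul_cancel₀ _ hApos.ne']
    · rw [qZero, hqderiv x, Real.log_mul hcpos.ne' (Real.exp_ne_zero _), Real.log_exp, add_comm]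
  · -- well-definedness
    rintro u ⟨hu, hper⟩ ψ
    have huc : Continuous u := hu.continuous
    have hApos : 0 < ∫ s in (0:ℝ)..(2*π), Real.exp (u s) := A_pos huc
    funext x
    simp only [qZeroInv, Real.exp_add]
    rw [intervalIntegral.integral_mul_const, intervalIntegral.integral_mul_const]
    have he := Real.exp_ne_zero ψ
    field_simp
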